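/- arXiv:2504.04577 — 2 statements merged into one kernel-verified Lean document; each statement's English description precedes it below -/
import Mathlib

section
/- Let I=(A,B,≻,q) be a school matching instance and define, for stable matchings M,M', M ≥ M' iff M(a) ⪰_a M'(a) for every student a∈A. Then (S(I),≥) is a lattice: for M,M'∈S(I), the matching that pairs every student a with the more preferred (w.r.t. ≻_a) of M(a) and M'(a), and pairs every school having strictly fewer than q_b student partners also with ∅, is stable and is the join M∨M'; the matching that pairs every student with the less preferred of M(a) and M'(a) (schools with fewer than q_b student partners also paired with ∅) is stable and is the meet M∧M'. -/
/-! If a student `a` prefers its partner `b` in a stable matching `N` to its partner in a stable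
matching `M`, then stability of `M` forces `b` to be full in `M` and to prefer every student of
`M(b)` to `a`. Hence no two students can enter a school in the join from opposite sides, so the
join respects the quotas; and since it moves students only into full schools and unassigns
nobody, a double count shows it fills every school exactly as `M` (and `M'`) does. As
`|J(b)| + |W(b)| = |M(b)| + |M'(b)|`, the meet does so too. Slack of a school in the join or meet
is then slack in `M`, and every blocking pair reduces to one of `M` or `M'`, except in one case
for the meet, which would overfill a school. -/

open Classical
open scoped ENNReal

noncomputable section

namespace SM

/-- A school matching instance: students `A`, schools `B`, strict preference
orders over the other side plus the outside option `∅` (encoded as `none`),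
and quotas `q b ≤ |A|`. -/
structure SchoolInstance (A B : Type) [Fintype A] [Fintype B] where
  prefA : A → Option B → Option B → Prop
  prefB : B → Option A → Option A → Prop
  prefA_sto : ∀ a, IsStrictTotalOrder (Option B) (prefA a)
  prefB_sto : ∀ b, IsStrictTotalOrder (Option A) (prefB b)
  q : B → ℕ
  q_le : ∀ b, q b ≤ Fintype.card A

variable {A B : Type} [Fintype A] [Fintype B] [DecidableEq A] [DecidableEq B]

/-- A matching: every student is assigned a school or the outside option, and
each school receives at most `q b` students.  (A school is implicitly paired
with the outside option exactly when it has strictly fewer than `q b`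
students, and a student is paired with the outside option exactly when it has
no school; this determines the set of pairs of the matching.) -/
structure Matching {A B : Type} [Fintype A] [Fintype B] (I : SchoolInstance A B) where
  toFun : A → Option B
  quota : ∀ b : B, (Finset.univ.filter fun a => toFun a = some b).card ≤ I.q b

instance (I : SchoolInstance A B) : Nonempty (Matching I) := by
  refine ⟨⟨fun _ => none, fun b => ?_⟩⟩
  have h : (Finset.univ.filter fun _ : A => (none : Option B) = some b) = ∅ :=
    Finset.filter_false_of_mem (by intro a _; simp)
  rw [h, Finset.card_empty]
  exact Nat.zero_le _

/-- The students assigned to school `b`. -/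
def assignedTo (I : SchoolInstance A B) (M : Matching I) (b : B) : Finset A :=
  Finset.univ.filter fun a => M.toFun a = some b

/-- School `b` has strictly fewer than `q b` students, i.e. is also paired
with the outside option. -/
def hasSlack (I : SchoolInstance A B) (M : Matching I) (b : B) : Prop :=
  (assignedTo I M b).card < I.q b

/-- `x ∈ M(b)`: the partners of school `b` (students assigned to it, plus the
outside option when it is under quota). -/
def inPartners (I : SchoolInstance A B) (M : Matching I) (b : B) (x : Option A) : Prop :=
  (∃ a : A, x = some a ∧ M.toFun a = some b) ∨ (x = none ∧ hasSlack I M b)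

/-- `M(b)` as a set. -/
def partnersSet (I : SchoolInstance A B) (M : Matching I) (b : B) : Set (Option A) :=
  {x | inPartners I M b x}

/-- The pair `ab` blocks `M`. -/
def BlocksPair (I : SchoolInstance A B) (M : Matching I) (a : A) (b : B) : Prop :=
  I.prefA a (some b) (M.toFun a) ∧ ∃ x, inPartners I M b x ∧ I.prefB b (some a) x

/-- Student `a` blocks `M` (prefers the outside option to its partner). -/
def BlocksStudent (I : SchoolInstance A B) (M : Matching I) (a : A) : Prop :=
  I.prefA a none (M.toFun a)

/-- School `b` blocks `M` (prefers the outside option to one of its partners). -/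
def BlocksSchool (I : SchoolInstance A B) (M : Matching I) (b : B) : Prop :=
  ∃ a : A, M.toFun a = some b ∧ I.prefB b none (some a)

/-- Stability: no blocking pair and no blocking agent. -/
def Stable (I : SchoolInstance A B) (M : Matching I) : Prop :=
  (¬ ∃ a b, BlocksPair I M a b) ∧ (¬ ∃ a, BlocksStudent I M a) ∧ (¬ ∃ b, BlocksSchool I M b)

/-- `M ≥ M'`: every student weakly prefers `M` to `M'`. -/
def matGE (I : SchoolInstance A B) (M M' : Matching I) : Prop :=
  ∀ a : A, M.toFun a = M'.toFun a ∨ I.prefA a (M.toFun a) (M'.toFun a)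

/-- `M' < M` in the student order. -/
def matLT (I : SchoolInstance A B) (M' M : Matching I) : Prop :=
  matGE I M M' ∧ M'.toFun ≠ M.toFun

/-- `M'` is an immediate predecessor of `M` in `(S(I), ≥)`. -/
def ImmPred (I : SchoolInstance A B) (M' M : Matching I) : Prop :=
  Stable I M' ∧ Stable I M ∧ matLT I M' M ∧
    ¬ ∃ M'' : Matching I, Stable I M'' ∧ matLT I M' M'' ∧ matLT I M'' M

/-- The type in which rotations live: pairs `(ρ₊, ρ₋)` of sets of
student/school pairs (with the outside option allowed on either side). -/
abbrev Rot (A B : Type) : Type :=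
  Finset (Option A × Option B) × Finset (Option A × Option B)

/-- The set of pairs of a matching: each student with its partner, and each
under-quota school with the outside option. -/
def pairsOf (I : SchoolInstance A B) (M : Matching I) : Finset (Option A × Option B) :=
  Finset.univ.filter fun p =>
    (∃ a : A, p = (some a, M.toFun a)) ∨ (∃ b : B, hasSlack I M b ∧ p = (none, some b))

/-- The rotation `ρ(M, M') = (M ∖ M', M' ∖ M)`. -/
def rho (I : SchoolInstance A B) (M M' : Matching I) : Rot A B :=
  (pairsOf I M \ pairsOf I M', pairsOf I M' \ pairsOf I M)

/-- `R(I)`: the set of all rotations of `I`. -/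
def RotSet (I : SchoolInstance A B) : Set (Rot A B) :=
  {r | ∃ M M' : Matching I, ImmPred I M' M ∧ r = rho I M M'}

/-- `c` is a maximal chain of stable matchings from `M0` down to `M`:
consecutive entries are immediate predecessors. -/
def chainTo (I : SchoolInstance A B) (M0 M : Matching I) (c : List (Matching I)) : Prop :=
  c.head? = some M0 ∧ c.getLast? = some M ∧ (∀ N ∈ c, Stable I N) ∧
    List.Chain' (fun X Y => ImmPred I Y X) c

/-- The set of rotations eliminated along the chain `c`. -/
def chainRots (I : SchoolInstance A B) (c : List (Matching I)) : Set (Rot A B) :=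
  {r | ∃ (i : ℕ) (X Y : Matching I), getElem? c i = some X ∧ getElem? c (i + 1) = some Y ∧ r = rho I X Y}

/-- `ρ` is exposed in `M`. -/
def Exposed (I : SchoolInstance A B) (r : Rot A B) (M : Matching I) : Prop :=
  ∃ M', ImmPred I M' M ∧ r = rho I M M'

/-- The rotation poset `ρ ⊵ ρ'` (relative to the rotation-set map `RM`):
either `ρ = ρ'`, or `ρ ∈ R_M` for every stable `M` in which `ρ'` is exposed. -/
def domRel (I : SchoolInstance A B) (RM : Matching I → Set (Rot A B)) (r r' : Rot A B) : Prop :=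
  r = r' ∨ ∀ M, Stable I M → Exposed I r' M → r ∈ RM M

/-- `ρ ▷ ρ'`. -/
def strictDom (I : SchoolInstance A B) (RM : Matching I → Set (Rot A B)) (r r' : Rot A B) : Prop :=
  domRel I RM r r' ∧ r ≠ r'

/-- `R ⊆ R(I)` is upper-closed in the rotation poset. -/
def UpperClosed (I : SchoolInstance A B) (RM : Matching I → Set (Rot A B))
    (R : Set (Rot A B)) : Prop :=
  R ⊆ RotSet I ∧ ∀ r' ∈ R, ∀ r ∈ RotSet I, domRel I RM r r' → r ∈ R

/-- `N` is the join `M ∨ M'` (least upper bound) in `(S(I), ≥)`. -/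
def IsJoin (I : SchoolInstance A B) (M M' N : Matching I) : Prop :=
  Stable I N ∧ matGE I N M ∧ matGE I N M' ∧
    ∀ P, Stable I P → matGE I P M → matGE I P M' → matGE I P N

/-- `N` is the meet `M ∧ M'` (greatest lower bound) in `(S(I), ≥)`. -/
def IsMeet (I : SchoolInstance A B) (M M' N : Matching I) : Prop :=
  Stable I N ∧ matGE I M N ∧ matGE I M' N ∧
    ∀ P, Stable I P → matGE I M P → matGE I M' P → matGE I N P

/-- `F` is a (nonempty) sublattice of the lattice of stable matchings. -/
def IsSublattice (I : SchoolInstance A B) (F : Set (Matching I)) : Prop :=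
  F.Nonempty ∧ (∀ M ∈ F, Stable I M) ∧
    (∀ M ∈ F, ∀ M' ∈ F, ∃ N ∈ F, IsJoin I M M' N) ∧
    (∀ M ∈ F, ∀ M' ∈ F, ∃ N ∈ F, IsMeet I M M' N)

/-- `ρ ~ ρ'`: the two rotations are eliminated together in every matching of `F`. -/
def rotEquiv (I : SchoolInstance A B) (RM : Matching I → Set (Rot A B))
    (F : Set (Matching I)) (r r' : Rot A B) : Prop :=
  ∀ M ∈ F, (r ∈ RM M ↔ r' ∈ RM M)

/-- The trivial meta-rotation `θ₀^F` of rotations eliminated in every matching of `F`. -/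
def theta0 (I : SchoolInstance A B) (RM : Matching I → Set (Rot A B))
    (F : Set (Matching I)) : Set (Rot A B) :=
  {r | r ∈ RotSet I ∧ ∀ M ∈ F, r ∈ RM M}

/-- The trivial meta-rotation `θ_z^F` of rotations eliminated in no matching of `F`. -/
def thetaZ (I : SchoolInstance A B) (RM : Matching I → Set (Rot A B))
    (F : Set (Matching I)) : Set (Rot A B) :=
  {r | r ∈ RotSet I ∧ ∀ M ∈ F, r ∉ RM M}

/-- `θ` is a meta-rotation of `F` (an equivalence class of `~`). -/
def IsMetaRot (I : SchoolInstance A B) (RM : Matching I → Set (Rot A B))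
    (F : Set (Matching I)) (θ : Set (Rot A B)) : Prop :=
  ∃ r ∈ RotSet I, θ = {r' | r' ∈ RotSet I ∧ rotEquiv I RM F r r'}

/-- `θ` is a proper meta-rotation of `F`. -/
def IsProperMeta (I : SchoolInstance A B) (RM : Matching I → Set (Rot A B))
    (F : Set (Matching I)) (θ : Set (Rot A B)) : Prop :=
  IsMetaRot I RM F θ ∧ θ ≠ theta0 I RM F ∧ θ ≠ thetaZ I RM F

/-- `θ ⊵^F θ'` on (proper) meta-rotations. -/
def metaDom (I : SchoolInstance A B) (RM : Matching I → Set (Rot A B))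
    (F : Set (Matching I)) (θ θ' : Set (Rot A B)) : Prop :=
  ∀ M ∈ F, θ' ⊆ RM M → θ ⊆ RM M

/-- `Θ_M`: the set of proper meta-rotations contained in `R_M`. -/
def ThetaM (I : SchoolInstance A B) (RM : Matching I → Set (Rot A B))
    (F : Set (Matching I)) (M : Matching I) : Set (Set (Rot A B)) :=
  {θ | IsProperMeta I RM F θ ∧ θ ⊆ RM M}

/-- `Θ` is an upper-closed set of proper meta-rotations. -/
def UCProper (I : SchoolInstance A B) (RM : Matching I → Set (Rot A B))
    (F : Set (Matching I)) (Θ : Set (Set (Rot A B))) : Prop :=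
  (∀ θ ∈ Θ, IsProperMeta I RM F θ) ∧
    ∀ θ' ∈ Θ, ∀ θ, IsProperMeta I RM F θ → metaDom I RM F θ θ' → θ ∈ Θ

/-- `M_R`: the stable matching whose rotation set is `R` (via definite description). -/
def MofR (I : SchoolInstance A B) (RM : Matching I → Set (Rot A B))
    (R : Set (Rot A B)) : Matching I :=
  Classical.epsilon fun M => Stable I M ∧ RM M = R

/-- `R^θ = θ₀^F ∪ ⋃ {θ' proper : θ' ⊵^F θ}`. -/
def Rup (I : SchoolInstance A B) (RM : Matching I → Set (Rot A B))
    (F : Set (Matching I)) (θ : Set (Rot A B)) : Set (Rot A B) :=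
  theta0 I RM F ∪ ⋃₀ {θ' | IsProperMeta I RM F θ' ∧ metaDom I RM F θ' θ}

/-- `R_θ = θ₀^F ∪ ⋃ {θ' proper : θ' ▷^F θ}`. -/
def Rdn (I : SchoolInstance A B) (RM : Matching I → Set (Rot A B))
    (F : Set (Matching I)) (θ : Set (Rot A B)) : Set (Rot A B) :=
  theta0 I RM F ∪ ⋃₀ {θ' | IsProperMeta I RM F θ' ∧ metaDom I RM F θ' θ ∧ θ' ≠ θ}

/-- `M^θ`. -/
def Mup (I : SchoolInstance A B) (RM : Matching I → Set (Rot A B))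
    (F : Set (Matching I)) (θ : Set (Rot A B)) : Matching I :=
  MofR I RM (Rup I RM F θ)

/-- `M_θ`. -/
def Mdn (I : SchoolInstance A B) (RM : Matching I → Set (Rot A B))
    (F : Set (Matching I)) (θ : Set (Rot A B)) : Matching I :=
  MofR I RM (Rdn I RM F θ)

/-- The meet `M ∧ M'` in the lattice of stable matchings (via definite description). -/
def meetM (I : SchoolInstance A B) (M M' : Matching I) : Matching I :=
  Classical.epsilon fun N => IsMeet I M M' N

/-- First order differential `∂f_θ = f(M^θ) − f(M_θ)`. -/
def d1 (I : SchoolInstance A B) (RM : Matching I → Set (Rot A B))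
    (F : Set (Matching I)) (f : Matching I → ℝ) (θ : Set (Rot A B)) : ℝ :=
  f (Mup I RM F θ) - f (Mdn I RM F θ)

/-- Second order differential
`∂²f_{θ,θ'} = f(M^θ ∧ M_{θ'}) + f(M_θ ∧ M^{θ'}) − f(M_θ ∧ M_{θ'}) − f(M^θ ∧ M^{θ'})`. -/
def d2 (I : SchoolInstance A B) (RM : Matching I → Set (Rot A B))
    (F : Set (Matching I)) (f : Matching I → ℝ) (θ θ' : Set (Rot A B)) : ℝ :=
  f (meetM I (Mup I RM F θ) (Mdn I RM F θ')) + f (meetM I (Mdn I RM F θ) (Mup I RM F θ'))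
    - f (meetM I (Mdn I RM F θ) (Mdn I RM F θ')) - f (meetM I (Mup I RM F θ) (Mup I RM F θ'))

/-- The greatest element `M₀^F` of `F` (via definite description). -/
def topF (I : SchoolInstance A B) (F : Set (Matching I)) : Matching I :=
  Classical.epsilon fun N => N ∈ F ∧ ∀ P ∈ F, matGE I N P

/-- Vertices of the digraph: all rotations, plus a source `s` and sink `t`. -/
abbrev Vtx (A B : Type) : Type := Rot A B ⊕ Bool

/-- The source `s`. -/
def srcV : Vtx A B := Sum.inr true

/-- The sink `t`. -/
def tgtV : Vtx A B := Sum.inr false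

/-- The value of the cut `S` for the capacity function `u`: the total capacity
of the arcs leaving `S`. -/
def cutVal (u : Vtx A B → Vtx A B → ℝ≥0∞) (S : Set (Vtx A B)) : ℝ≥0∞ :=
  ∑ p : Vtx A B × Vtx A B, if p.1 ∈ S ∧ p.2 ∉ S then u p.1 p.2 else 0

/-- The `s`-`t` cut `{s} ∪ R`. -/
def cutOf (R : Set (Rot A B)) : Set (Vtx A B) := insert srcV (Sum.inl '' R)

/-- `(u, C)` witnesses minimum cut representability of `Π(f, F)`: for every
`R ⊆ R(I)`, the cut `{s} ∪ R` has finite capacity iff `R` is upper-closed and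
`M_R ∈ F`, and in that case its value is `f(M_R) + C`. -/
def MinCutRepWith (I : SchoolInstance A B) (RM : Matching I → Set (Rot A B))
    (F : Set (Matching I)) (f : Matching I → ℝ)
    (u : Vtx A B → Vtx A B → ℝ≥0∞) (C : ℝ) : Prop :=
  ∀ R : Set (Rot A B), R ⊆ RotSet I →
    ((cutVal u (cutOf R) ≠ ⊤ ↔
        (UpperClosed I RM R ∧ ∃ M, Stable I M ∧ RM M = R ∧ M ∈ F)) ∧
      (∀ M, Stable I M → RM M = R → M ∈ F → (cutVal u (cutOf R)).toReal = f M + C))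

/-- The problem `Π(f, F)` is minimum cut representable. -/
def MinCutRep (I : SchoolInstance A B) (RM : Matching I → Set (Rot A B))
    (F : Set (Matching I)) (f : Matching I → ℝ) : Prop :=
  ∃ u C, MinCutRepWith I RM F f u C

/-- The cut digraph `D^{f,F}` (with representative rotations `rep` and
constant `γ`); capacities of parallel arcs are added. -/
def cutDigraph (I : SchoolInstance A B) (RM : Matching I → Set (Rot A B))
    (F : Set (Matching I)) (f : Matching I → ℝ)
    (rep : Set (Rot A B) → Rot A B) (γ : ℝ) : Vtx A B → Vtx A B → ℝ≥0∞ :=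
  fun x y =>
    (if ∃ θ, IsMetaRot I RM F θ ∧ ∃ r ∈ θ, ∃ r' ∈ θ, r ≠ r' ∧ x = Sum.inl r ∧ y = Sum.inl r'
      then ⊤ else 0)
    + (if ∃ θ θ', IsProperMeta I RM F θ ∧ IsProperMeta I RM F θ' ∧ θ ≠ θ' ∧
          metaDom I RM F θ' θ ∧ x = Sum.inl (rep θ) ∧ y = Sum.inl (rep θ')
        then ⊤ else 0)
    + (∑ θ : Set (Rot A B), ∑ θ' : Set (Rot A B),
        if IsProperMeta I RM F θ ∧ IsProperMeta I RM F θ' ∧ θ ≠ θ' ∧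
            x = Sum.inl (rep θ) ∧ y = Sum.inl (rep θ')
        then ENNReal.ofReal ((1 / 2) * d2 I RM F f θ θ') else 0)
    + (if (theta0 I RM F).Nonempty ∧ x = srcV ∧ y = Sum.inl (rep (theta0 I RM F))
        then ⊤ else 0)
    + (if (thetaZ I RM F).Nonempty ∧ x = Sum.inl (rep (thetaZ I RM F)) ∧ y = tgtV
        then ⊤ else 0)
    + (∑ θ : Set (Rot A B),
        if IsProperMeta I RM F θ ∧ x = Sum.inl (rep θ) ∧ y = tgtV
        then ENNReal.ofReal (d1 I RM F f θ -
          (1 / 2) * (∑ θ' : Set (Rot A B),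
            if IsProperMeta I RM F θ' ∧ θ' ≠ θ then d2 I RM F f θ θ' else 0) + γ)
        else 0)
    + (∑ θ : Set (Rot A B),
        if IsProperMeta I RM F θ ∧ x = srcV ∧ y = Sum.inl (rep θ)
        then ENNReal.ofReal γ else 0)

/-- `b` prefers `S'` to `S''`: every member of `S'` is preferred to every
member of `S'' ∖ S'`. -/
def prefersSet (I : SchoolInstance A B) (b : B) (S' S'' : Set (Option A)) : Prop :=
  ∀ x ∈ S', ∀ y ∈ S'', y ∉ S' → I.prefB b x y

/-- `A(ρ)`: students appearing in `ρ₊`. -/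
def Aof (r : Rot A B) : Set A := {a | ∃ b : B, (some a, some b) ∈ r.1}

/-- `B(ρ)`: schools appearing in `ρ₊`. -/
def Bof (r : Rot A B) : Set B := {b | ∃ a : A, (some a, some b) ∈ r.1}

/-- `ρ₊(b)`: students matched to `b` in `ρ₊`. -/
def rhoPlusB (r : Rot A B) (b : B) : Set A := {a | (some a, some b) ∈ r.1}

/-- `R^ρ = {ρ' : ρ' ⊵ ρ}`. -/
def RupRot (I : SchoolInstance A B) (RM : Matching I → Set (Rot A B))
    (r : Rot A B) : Set (Rot A B) :=
  {r' | r' ∈ RotSet I ∧ domRel I RM r' r}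

/-- `R_ρ = {ρ' : ρ' ▷ ρ}`. -/
def RdnRot (I : SchoolInstance A B) (RM : Matching I → Set (Rot A B))
    (r : Rot A B) : Set (Rot A B) :=
  {r' | r' ∈ RotSet I ∧ strictDom I RM r' r}

/-- `M^ρ`. -/
def MupRot (I : SchoolInstance A B) (RM : Matching I → Set (Rot A B))
    (r : Rot A B) : Matching I :=
  MofR I RM (RupRot I RM r)

/-- `M_ρ`. -/
def MdnRot (I : SchoolInstance A B) (RM : Matching I → Set (Rot A B))
    (r : Rot A B) : Matching I :=
  MofR I RM (RdnRot I RM r)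

/-- First order differential of `f` at a rotation: `∂f_ρ = f(M^ρ) − f(M_ρ)`. -/
def d1Rot (I : SchoolInstance A B) (RM : Matching I → Set (Rot A B))
    (f : Matching I → ℝ) (r : Rot A B) : ℝ :=
  f (MupRot I RM r) - f (MdnRot I RM r)

/-- Second order differential of `f` at a pair of distinct rotations. -/
def d2Rot (I : SchoolInstance A B) (RM : Matching I → Set (Rot A B))
    (f : Matching I → ℝ) (r r' : Rot A B) : ℝ :=
  f (meetM I (MupRot I RM r) (MdnRot I RM r')) + f (meetM I (MdnRot I RM r) (MupRot I RM r'))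
    - f (meetM I (MdnRot I RM r) (MdnRot I RM r'))
    - f (meetM I (MupRot I RM r) (MupRot I RM r'))

/-- The pair `(ρ_in, ρ_out)` characterizes the stable matchings assigning both
siblings `a, ā` to school `b`. -/
def siblingChar (I : SchoolInstance A B) (RM : Matching I → Set (Rot A B))
    (a abar : A) (b : B) (p : Rot A B × Rot A B) : Prop :=
  ∀ M : Matching I, Stable I M →
    ((M.toFun a = some b ∧ M.toFun abar = some b) ↔ (p.1 ∈ RM M ∧ p.2 ∉ RM M))

/-- Some stable matching assigns both `a` and `ā` to `b`. -/
def goodSchool (I : SchoolInstance A B) (a abar : A) (b : B) : Prop :=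
  ∃ M, Stable I M ∧ M.toFun a = some b ∧ M.toFun abar = some b

/-- The pair `(ρ_in(a,ā,b), ρ_out(a,ā,b))` (via definite description). -/
def siblingPair (I : SchoolInstance A B) (RM : Matching I → Set (Rot A B))
    (a abar : A) (b : B) : Rot A B × Rot A B :=
  Classical.epsilon fun p => p.1 ∈ RotSet I ∧ p.2 ∈ RotSet I ∧
    siblingChar I RM a abar b p ∧ strictDom I RM p.1 p.2

/-- `R_in(a, ā)`. -/
def Rin (I : SchoolInstance A B) (RM : Matching I → Set (Rot A B))
    (a abar : A) : Set (Rot A B) :=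
  {r | ∃ b, goodSchool I a abar b ∧ r = (siblingPair I RM a abar b).1}

/-- `R_out(a, ā)`. -/
def Rout (I : SchoolInstance A B) (RM : Matching I → Set (Rot A B))
    (a abar : A) : Set (Rot A B) :=
  {r | ∃ b, goodSchool I a abar b ∧ r = (siblingPair I RM a abar b).2}

/-- The indicator function: `0` when the siblings are matched to the same
school, `1` otherwise. -/
def sibIndicator (I : SchoolInstance A B) (a abar : A) : Matching I → ℝ :=
  fun M => if M.toFun a = M.toFun abar then 0 else 1

end SM

namespace SM

section Fiber

variable {A B : Type} [Fintype A] [DecidableEq B]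

def fiber (f : A → Option B) (b : B) : Finset A :=
  Finset.univ.filter fun a => f a = some b

lemma sum_card_fiber [Fintype B] (f : A → Option B) :
    ∑ b, (fiber f b).card = (Finset.univ.filter fun a => (f a).isSome).card := by
  simp only [fiber, Finset.card_filter]
  rw [Finset.sum_comm]
  refine Finset.sum_congr rfl fun a _ => ?_
  cases f a <;> simp

lemma card_fiber_add_card_fiber {f g h k : A → Option B}
    (hfg : ∀ a, (f a = h a ∧ g a = k a) ∨ (f a = k a ∧ g a = h a)) (b : B) :
    (fiber f b).card + (fiber g b).card = (fiber h b).card + (fiber k b).card := by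
  simp only [fiber, Finset.card_filter, ← Finset.sum_add_distrib]
  refine Finset.sum_congr rfl fun a _ => ?_
  rcases hfg a with ⟨hf, hg⟩ | ⟨hf, hg⟩ <;> simp only [hf, hg]
  omega

lemma card_fiber_eq_of_le [Fintype B] {f g : A → Option B}
    (hle : ∀ b, (fiber f b).card ≤ (fiber g b).card) (hnone : ∀ a, f a = none → g a = none)
    (b : B) : (fiber f b).card = (fiber g b).card := by
  have hsum : ∑ b, (fiber g b).card ≤ ∑ b, (fiber f b).card := by
    rw [sum_card_fiber, sum_card_fiber]
    refine Finset.card_le_card fun a ha => ?_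
    simp only [Finset.mem_filter, Finset.mem_univ, true_and, Option.isSome_iff_ne_none] at ha ⊢
    exact fun hf => ha (hnone a hf)
  exact (Finset.sum_eq_sum_iff_of_le fun b _ => hle b).mp
    (le_antisymm (Finset.sum_le_sum fun b _ => hle b) hsum) b (Finset.mem_univ b)

end Fiber

section JoinMeet

variable {A B : Type} [Fintype A] [Fintype B] {I : SchoolInstance A B}

instance (I : SchoolInstance A B) (a : A) : IsStrictTotalOrder (Option B) (I.prefA a) :=
  I.prefA_sto a

instance (I : SchoolInstance A B) (b : B) : IsStrictTotalOrder (Option A) (I.prefB b) :=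
  I.prefB_sto b

variable (M M' : Matching I)

def joinFun : A → Option B := fun a =>
  if I.prefA a (M.toFun a) (M'.toFun a) then M.toFun a else M'.toFun a

def meetFun : A → Option B := fun a =>
  if I.prefA a (M.toFun a) (M'.toFun a) then M'.toFun a else M.toFun a

variable {M M'}

lemma joinFun_comm : joinFun M M' = joinFun M' M := by
  funext a
  unfold joinFun
  rcases trichotomous_of (I.prefA a) (M.toFun a) (M'.toFun a) with h | h | h
  · simp [h, asymm_of (I.prefA a) h]
  · simp [h]
  · simp [h, asymm_of (I.prefA a) h]

lemma meetFun_comm : meetFun M M' = meetFun M' M := by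
  funext a
  unfold meetFun
  rcases trichotomous_of (I.prefA a) (M.toFun a) (M'.toFun a) with h | h | h
  · simp [h, asymm_of (I.prefA a) h]
  · simp [h]
  · simp [h, asymm_of (I.prefA a) h]

variable (a : A)

lemma joinFun_eq_or : joinFun M M' a = M.toFun a ∨ joinFun M M' a = M'.toFun a := by
  unfold joinFun
  split_ifs <;> simp

lemma meetFun_eq_or : meetFun M M' a = M.toFun a ∨ meetFun M M' a = M'.toFun a := by
  unfold meetFun
  split_ifs <;> simp

lemma joinFun_meetFun_eq_or :
    (joinFun M M' a = M.toFun a ∧ meetFun M M' a = M'.toFun a) ∨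
      (joinFun M M' a = M'.toFun a ∧ meetFun M M' a = M.toFun a) := by
  unfold joinFun meetFun
  split_ifs <;> simp

lemma joinFun_ge_left :
    joinFun M M' a = M.toFun a ∨ I.prefA a (joinFun M M' a) (M.toFun a) := by
  unfold joinFun
  split_ifs with h
  · exact Or.inl rfl
  · rcases trichotomous_of (I.prefA a) (M.toFun a) (M'.toFun a) with h' | h' | h'
    · exact absurd h' h
    · exact Or.inl h'.symm
    · exact Or.inr h'

lemma joinFun_ge_right :
    joinFun M M' a = M'.toFun a ∨ I.prefA a (joinFun M M' a) (M'.toFun a) := by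
  rw [joinFun_comm]
  exact joinFun_ge_left a

lemma joinFun_eq_right_of_ne_left (h : joinFun M M' a ≠ M.toFun a) :
    joinFun M M' a = M'.toFun a ∧ I.prefA a (joinFun M M' a) (M.toFun a) :=
  ⟨(joinFun_eq_or a).resolve_left h, (joinFun_ge_left a).resolve_left h⟩

lemma prefA_of_prefA_joinFun {x : Option B} (h : I.prefA a x (joinFun M M' a)) :
    I.prefA a x (M.toFun a) ∧ I.prefA a x (M'.toFun a) := by
  constructor
  · rcases joinFun_ge_left (M' := M') a with h' | h'
    · exact h' ▸ h
    · exact trans_of (I.prefA a) h h'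
  · rcases joinFun_ge_right (M := M) a with h' | h'
    · exact h' ▸ h
    · exact trans_of (I.prefA a) h h'

lemma meetFun_le_left :
    M.toFun a = meetFun M M' a ∨ I.prefA a (M.toFun a) (meetFun M M' a) := by
  unfold meetFun
  split_ifs with h
  · exact Or.inr h
  · exact Or.inl rfl

lemma meetFun_le_right :
    M'.toFun a = meetFun M M' a ∨ I.prefA a (M'.toFun a) (meetFun M M' a) := by
  rw [meetFun_comm]
  exact meetFun_le_left a

lemma meetFun_eq_left_of_ge
    (h : M'.toFun a = M.toFun a ∨ I.prefA a (M'.toFun a) (M.toFun a)) :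
    meetFun M M' a = M.toFun a := by
  unfold meetFun
  split_ifs with h'
  · exact h.resolve_right (asymm_of (I.prefA a) h')
  · rfl

end JoinMeet

section Stable

variable {A B : Type} [Fintype A] [Fintype B] [DecidableEq B] {I : SchoolInstance A B}

lemma card_assignedTo_le (M : Matching I) (b : B) : (assignedTo I M b).card ≤ I.q b := by
  unfold assignedTo
  convert M.quota b

def Matching.ofFun (f : A → Option B) (hf : ∀ b, (fiber f b).card ≤ I.q b) : Matching I :=
  ⟨f, fun b => by unfold fiber at hf; convert hf b⟩

lemma hasSlack_of_card_eq {M N : Matching I} {b : B}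
    (h : (assignedTo I N b).card = (assignedTo I M b).card) (hs : hasSlack I N b) :
    hasSlack I M b := by
  unfold hasSlack at hs ⊢
  omega

variable {M M' N : Matching I}

lemma prefB_some_none_of_stable (hN : Stable I N) {a : A} {b : B} (h : N.toFun a = some b) :
    I.prefB b (some a) none := by
  rcases trichotomous_of (I.prefB b) (some a) none with h' | h' | h'
  · exact h'
  · exact absurd h' (Option.some_ne_none a)
  · exact absurd ⟨b, a, h, h'⟩ hN.2.2

lemma prefB_of_prefA_of_stable (hM : Stable I M) {a c : A} {b : B}
    (hp : I.prefA a (some b) (M.toFun a)) (hc : M.toFun c = some b) :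
    I.prefB b (some c) (some a) := by
  rcases trichotomous_of (I.prefB b) (some a) (some c) with h | h | h
  · exact absurd ⟨a, b, hp, some c, Or.inl ⟨c, rfl, hc⟩, h⟩ hM.1
  · cases h
    exact absurd (hc ▸ hp) (irrefl_of (I.prefA a) _)
  · exact h

lemma not_hasSlack_of_prefA_of_stable (hM : Stable I M) (hN : Stable I N) {a : A} {b : B}
    (hb : N.toFun a = some b) (hp : I.prefA a (some b) (M.toFun a)) : ¬ hasSlack I M b :=
  fun hs => hM.1 ⟨a, b, hp, none, Or.inr ⟨rfl, hs⟩, prefB_some_none_of_stable hN hb⟩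

lemma no_blocking_agent_of_eq_or (hM : Stable I M) (hM' : Stable I M')
    (hN : ∀ a, N.toFun a = M.toFun a ∨ N.toFun a = M'.toFun a) :
    (¬ ∃ a, BlocksStudent I N a) ∧ (¬ ∃ b, BlocksSchool I N b) := by
  constructor
  · rintro ⟨a, ha⟩
    rcases hN a with h | h
    · exact hM.2.1 ⟨a, show I.prefA a none (M.toFun a) from h ▸ ha⟩
    · exact hM'.2.1 ⟨a, show I.prefA a none (M'.toFun a) from h ▸ ha⟩
  · rintro ⟨b, a, hab, hp⟩
    rcases hN a with h | h
    · exact hM.2.2 ⟨b, a, h ▸ hab, hp⟩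
    · exact hM'.2.2 ⟨b, a, h ▸ hab, hp⟩

/-- Two students who reach `b` in the join from opposite sides would each be preferred
by `b` to the other. -/
lemma fiber_joinFun_subset (hM : Stable I M) (hM' : Stable I M') (b : B) :
    fiber (joinFun M M') b ⊆ assignedTo I M b ∨
      fiber (joinFun M M') b ⊆ assignedTo I M' b := by
  by_contra! h
  obtain ⟨a, haJ, haM⟩ := Finset.not_subset.mp h.1
  obtain ⟨c, hcJ, hcM'⟩ := Finset.not_subset.mp h.2
  simp only [fiber, assignedTo, Finset.mem_filter, Finset.mem_univ, true_and] at haJ haM hcJ hcM'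
  obtain ⟨haM', hpa⟩ := joinFun_eq_right_of_ne_left a (haJ ▸ Ne.symm haM)
  rw [joinFun_comm] at hcJ
  obtain ⟨hcM, hpc⟩ := joinFun_eq_right_of_ne_left c (hcJ ▸ Ne.symm hcM')
  rw [haJ] at haM' hpa
  rw [hcJ] at hcM hpc
  exact asymm_of (I.prefB b) (prefB_of_prefA_of_stable hM hpa hcM.symm)
    (prefB_of_prefA_of_stable hM' hpc haM'.symm)

lemma card_fiber_joinFun_le (hM : Stable I M) (hM' : Stable I M') (b : B) :
    (fiber (joinFun M M') b).card ≤ I.q b := by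
  rcases fiber_joinFun_subset hM hM' b with h | h
  · exact (Finset.card_le_card h).trans (card_assignedTo_le M b)
  · exact (Finset.card_le_card h).trans (card_assignedTo_le M' b)

lemma card_fiber_joinFun (hM : Stable I M) (hM' : Stable I M') (b : B) :
    (fiber (joinFun M M') b).card = (assignedTo I M b).card := by
  refine card_fiber_eq_of_le (fun b => ?_) (fun a ha => ?_) b
  · by_cases hsub : fiber (joinFun M M') b ⊆ fiber M.toFun b
    · exact Finset.card_le_card hsub
    obtain ⟨a, haJ, haM⟩ := Finset.not_subset.mp hsub
    simp only [fiber, Finset.mem_filter, Finset.mem_univ, true_and] at haJ haM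
    obtain ⟨haM', hpa⟩ := joinFun_eq_right_of_ne_left a (haJ ▸ Ne.symm haM)
    rw [haJ] at haM' hpa
    have hfull := not_hasSlack_of_prefA_of_stable hM hM' haM'.symm hpa
    unfold hasSlack assignedTo at hfull
    exact (card_fiber_joinFun_le hM hM' b).trans (not_lt.mp hfull)
  · rcases joinFun_ge_left (M' := M') a with h | h
    · exact h ▸ ha
    · exact absurd ⟨a, show I.prefA a none (M.toFun a) from ha ▸ h⟩ hM.2.1

lemma card_fiber_meetFun (hM : Stable I M) (hM' : Stable I M') (b : B) :
    (fiber (meetFun M M') b).card = (assignedTo I M b).card := by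
  have hsum := card_fiber_add_card_fiber (joinFun_meetFun_eq_or (M := M) (M' := M')) b
  have hJM : (fiber (joinFun M M') b).card = (fiber M.toFun b).card := card_fiber_joinFun hM hM' b
  have hJM' : (fiber (joinFun M M') b).card = (fiber M'.toFun b).card := by
    rw [joinFun_comm]
    exact card_fiber_joinFun hM' hM b
  change _ = (fiber M.toFun b).card
  omega

def joinMatching (hM : Stable I M) (hM' : Stable I M') : Matching I :=
  Matching.ofFun (joinFun M M') (card_fiber_joinFun_le hM hM')

def meetMatching (hM : Stable I M) (hM' : Stable I M') : Matching I :=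
  Matching.ofFun (meetFun M M') fun b => card_fiber_meetFun hM hM' b ▸ card_assignedTo_le M b

lemma stable_joinMatching (hM : Stable I M) (hM' : Stable I M') :
    Stable I (joinMatching hM hM') := by
  refine ⟨?_, no_blocking_agent_of_eq_or hM hM' (joinFun_eq_or (M := M) (M' := M'))⟩
  rintro ⟨a, b, hab, x, hx, hxa⟩
  obtain ⟨habM, habM'⟩ := prefA_of_prefA_joinFun a hab
  rcases hx with ⟨c, rfl, hc⟩ | ⟨rfl, hs⟩
  · rcases joinFun_eq_or (M := M) (M' := M') c with h | h
    · exact hM.1 ⟨a, b, habM, some c, Or.inl ⟨c, rfl, h ▸ hc⟩, hxa⟩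
    · exact hM'.1 ⟨a, b, habM', some c, Or.inl ⟨c, rfl, h ▸ hc⟩, hxa⟩
  · have hsM := hasSlack_of_card_eq (N := joinMatching hM hM') (card_fiber_joinFun hM hM' b) hs
    exact hM.1 ⟨a, b, habM, none, Or.inr ⟨rfl, hsM⟩, hxa⟩

/-- If `a` keeps its `M`-partner in the meet `N` and `a, b` blocked `N` through a student `a'`
of `M'(b) \ M(b)`, then `M(b) ∪ {a'} ⊆ N(b)`, contradicting `|N(b)| = |M(b)|`. -/
lemma not_blocksPair_of_meetFun (hM : Stable I M) (hM' : Stable I M')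
    (hN : N.toFun = meetFun M M') (hcard : ∀ b, (assignedTo I N b).card = (assignedTo I M b).card)
    {a : A} {b : B} (ha : N.toFun a = M.toFun a) : ¬ BlocksPair I N a b := by
  rintro ⟨hab, x, hx, hxa⟩
  rw [ha] at hab
  rcases hx with ⟨a', rfl, ha'⟩ | ⟨rfl, hs⟩
  · by_cases hMa' : M.toFun a' = some b
    · exact hM.1 ⟨a, b, hab, some a', Or.inl ⟨a', rfl, hMa'⟩, hxa⟩
    have hM'a' : M'.toFun a' = some b := by
      rw [hN] at ha'
      exact (meetFun_eq_or a').resolve_left (fun h => hMa' (h ▸ ha')) ▸ ha'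
    have hsub : assignedTo I M b ⊆ assignedTo I N b := by
      intro c hc
      simp only [assignedTo, Finset.mem_filter, Finset.mem_univ, true_and] at hc ⊢
      have hca' : I.prefB b (some c) (some a') :=
        trans_of (I.prefB b) (prefB_of_prefA_of_stable hM hab hc) hxa
      have hge : M'.toFun c = M.toFun c ∨ I.prefA c (M'.toFun c) (M.toFun c) := by
        rw [hc]
        rcases trichotomous_of (I.prefA c) (some b) (M'.toFun c) with h | h | h
        · exact absurd ⟨c, b, h, some a', Or.inl ⟨a', rfl, hM'a'⟩, hca'⟩ hM'.1
        · exact Or.inl h.symm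
        · exact Or.inr h
      rw [hN, meetFun_eq_left_of_ge c hge, hc]
    have hlt : (assignedTo I M b).card < (assignedTo I N b).card :=
      Finset.card_lt_card ⟨hsub, fun h => hMa' (Finset.mem_filter.mp
        (h (Finset.mem_filter.mpr ⟨Finset.mem_univ a', ha'⟩))).2⟩
    exact hlt.ne' (hcard b)
  · exact hM.1 ⟨a, b, hab, none, Or.inr ⟨rfl, hasSlack_of_card_eq (hcard b) hs⟩, hxa⟩

lemma stable_meetMatching (hM : Stable I M) (hM' : Stable I M') :
    Stable I (meetMatching hM hM') := by
  refine ⟨?_, no_blocking_agent_of_eq_or hM hM' (meetFun_eq_or (M := M) (M' := M'))⟩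
  rintro ⟨a, b, hab⟩
  rcases meetFun_eq_or (M := M) (M' := M') a with h | h
  · exact not_blocksPair_of_meetFun (N := meetMatching hM hM') hM hM' rfl
      (card_fiber_meetFun hM hM') h hab
  · refine not_blocksPair_of_meetFun hM' hM meetFun_comm (fun b => ?_) h hab
    change (fiber (meetFun M M') b).card = _
    rw [meetFun_comm]
    exact card_fiber_meetFun hM' hM b

lemma isJoin_joinMatching (hM : Stable I M) (hM' : Stable I M') :
    IsJoin I M M' (joinMatching hM hM') := by
  refine ⟨stable_joinMatching hM hM', joinFun_ge_left, joinFun_ge_right,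
    fun P _ hPM hPM' a => ?_⟩
  change P.toFun a = joinFun M M' a ∨ I.prefA a (P.toFun a) (joinFun M M' a)
  rcases joinFun_eq_or (M := M) (M' := M') a with h | h <;> rw [h]
  · exact hPM a
  · exact hPM' a

lemma isMeet_meetMatching (hM : Stable I M) (hM' : Stable I M') :
    IsMeet I M M' (meetMatching hM hM') := by
  refine ⟨stable_meetMatching hM hM', meetFun_le_left, meetFun_le_right,
    fun P _ hMP hM'P a => ?_⟩
  change meetFun M M' a = P.toFun a ∨ I.prefA a (meetFun M M' a) (P.toFun a)
  rcases meetFun_eq_or (M := M) (M' := M') a with h | h <;> rw [h]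
  · exact hMP a
  · exact hM'P a

end Stable

variable {A B : Type} [Fintype A] [Fintype B] [DecidableEq A] [DecidableEq B]

/-- the lattice of stable matchings. -/
theorem stmt0 (I : SchoolInstance A B) (M M' : Matching I)
    (hM : Stable I M) (hM' : Stable I M') :
    (∃ N : Matching I,
        N.toFun = (fun a => if I.prefA a (M.toFun a) (M'.toFun a)
          then M.toFun a else M'.toFun a) ∧
        Stable I N ∧ IsJoin I M M' N) ∧
    (∃ N : Matching I,
        N.toFun = (fun a => if I.prefA a (M.toFun a) (M'.toFun a)
          then M'.toFun a else M.toFun a) ∧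
        Stable I N ∧ IsMeet I M M' N) :=
  ⟨⟨joinMatching hM hM', rfl, stable_joinMatching hM hM', isJoin_joinMatching hM hM'⟩,
    ⟨meetMatching hM hM', rfl, stable_meetMatching hM hM', isMeet_meetMatching hM hM'⟩⟩

end SM
end
end

section
/- Let I be a school matching instance with student-pessimal stable matching M_z. Then R_{M_z} = R(I), i.e., M_z is the stable matching obtained from M_0 by eliminating all rotations of I. -/
open Classical
open scoped ENNReal

noncomputable section

/-!
The stable matchings form a finite poset, so any two comparable ones are joined by a maximal
chain. Evaluating `R_{M_z}` along one maximal chain from `M_0` to `M_z` shows that it consists of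
rotations. Conversely, a rotation `ρ(M, M')` lies on the maximal chain that runs from `M_0` down
to `M`, steps to its immediate predecessor `M'`, and continues down to `M_z`.
-/

namespace SM

section

variable {A B : Type} [Fintype A] [Fintype B] {I : SchoolInstance A B}

theorem Matching.toFun_injective : Function.Injective (Matching.toFun (I := I)) := by
  rintro ⟨f, _⟩ ⟨g, _⟩ (rfl : f = g)
  rfl

instance : Finite (Matching I) :=
  .of_injective _ Matching.toFun_injective

theorem matGE_trans {X Y Z : Matching I} (hXY : matGE I X Y) (hYZ : matGE I Y Z) :
    matGE I X Z := by
  intro a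
  have := I.prefA_sto a
  rcases hXY a with h₁ | h₁ <;> rcases hYZ a with h₂ | h₂
  · exact .inl (h₁.trans h₂)
  · exact .inr (h₁ ▸ h₂)
  · exact .inr (h₂ ▸ h₁)
  · exact .inr (_root_.trans h₁ h₂)

theorem matGE_antisymm {X Y : Matching I} (hXY : matGE I X Y) (hYX : matGE I Y X) : X = Y := by
  refine Matching.toFun_injective (funext fun a => ?_)
  have := I.prefA_sto a
  rcases hXY a with h | h
  · exact h
  rcases hYX a with h' | h'
  · exact h'.symm
  · exact absurd (_root_.trans h h') (irrefl _)

instance : PartialOrder (Matching I) where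
  le M N := matGE I N M
  le_refl _ _ := .inl rfl
  le_trans _ _ _ h₁ h₂ := matGE_trans h₂ h₁
  le_antisymm _ _ h₁ h₂ := matGE_antisymm h₂ h₁

theorem matLT_iff_lt {M' M : Matching I} : matLT I M' M ↔ M' < M := by
  rw [lt_iff_le_and_ne, ← Matching.toFun_injective.ne_iff]
  rfl

theorem immPred_of_covBy [DecidableEq B] {M' M : {M : Matching I // Stable I M}} (h : M' ⋖ M) :
    ImmPred I M'.1 M.1 :=
  ⟨M'.2, M.2, matLT_iff_lt.2 h.1, fun ⟨N, hN, h₁, h₂⟩ =>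
    h.2 (c := ⟨N, hN⟩) (matLT_iff_lt.1 h₁) (matLT_iff_lt.1 h₂)⟩

theorem exists_chainTo [DecidableEq B] {X Y : Matching I} (hX : Stable I X) (hY : Stable I Y)
    (hXY : matGE I X Y) : ∃ c, chainTo I X Y c := by
  obtain ⟨a, ha₀, n, haₙ, hcov⟩ :=
    exists_covBy_seq_of_wellFoundedLT_wellFoundedGT_of_le
      (α := {M : Matching I // Stable I M}ᵒᵈ) (x := OrderDual.toDual ⟨X, hX⟩)
      (y := OrderDual.toDual ⟨Y, hY⟩) hXY
  refine ⟨(List.range (n + 1)).map fun i => (OrderDual.ofDual (a i)).1, ?_, ?_, ?_, ?_⟩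
  · simp [List.head?_range, ha₀]
  · simp [List.getLast?_range, haₙ]
  · simp only [List.mem_map]
    rintro _ ⟨i, -, rfl⟩
    exact (a i).2
  · show List.IsChain _ _
    rw [List.isChain_map, List.isChain_range_succ]
    exact fun i hi => immPred_of_covBy (hcov i hi).ofDual

theorem chainRots_subset_rotSet [DecidableEq A] [DecidableEq B] {X Y : Matching I}
    {c : List (Matching I)} (hc : chainTo I X Y c) : chainRots I c ⊆ RotSet I := by
  rintro _ ⟨i, P, Q, hP, hQ, rfl⟩
  obtain ⟨hi, rfl⟩ := List.getElem?_eq_some_iff.mp hP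
  obtain ⟨hi', rfl⟩ := List.getElem?_eq_some_iff.mp hQ
  exact ⟨_, _, List.isChain_iff_getElem.mp hc.2.2.2 i hi', rfl⟩

theorem chainTo.append [DecidableEq B] {X Y Y' Z : Matching I} {c d : List (Matching I)}
    (hc : chainTo I X Y c) (hd : chainTo I Y' Z d) (hY : ImmPred I Y' Y) :
    chainTo I X Z (c ++ d) := by
  obtain ⟨hc₀, hcₙ, hcs, hcc⟩ := hc
  obtain ⟨hd₀, hdₙ, hds, hdc⟩ := hd
  refine ⟨?_, ?_, ?_, ?_⟩
  · rw [List.head?_append, hc₀]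
    rfl
  · rw [List.getLast?_append, hdₙ]
    rfl
  · simpa only [List.mem_append, or_imp, forall_and] using ⟨hcs, hds⟩
  · refine List.isChain_append.2 ⟨hcc, hdc, fun P hP Q hQ => ?_⟩
    rw [hcₙ, Option.mem_some_iff] at hP
    rw [hd₀, Option.mem_some_iff] at hQ
    exact hP ▸ hQ ▸ hY

theorem rho_mem_chainRots_append [DecidableEq A] [DecidableEq B] {Y Y' : Matching I}
    {c d : List (Matching I)} (hc : c.getLast? = some Y) (hd : d.head? = some Y') :
    rho I Y Y' ∈ chainRots I (c ++ d) := by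
  have hlen : c.length - 1 + 1 = c.length :=
    Nat.sub_add_cancel (List.length_pos_of_ne_nil (by rintro rfl; simp at hc))
  refine ⟨c.length - 1, Y, Y', ?_, ?_, rfl⟩
  · rw [List.getElem?_append_left (by omega), ← List.getLast?_eq_getElem?, hc]
  · rw [hlen, List.getElem?_append_right le_rfl, Nat.sub_self, ← List.head?_eq_getElem?, hd]

end

variable {A B : Type} [Fintype A] [Fintype B] [DecidableEq A] [DecidableEq B]

/-- `R_{M_z} = R(I)`. -/
theorem stmt4 (I : SchoolInstance A B) (M0 Mz : Matching I)
    (hM0 : Stable I M0 ∧ ∀ N, Stable I N → matGE I M0 N)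
    (hMz : Stable I Mz ∧ ∀ N, Stable I N → matGE I N Mz)
    (RM : Matching I → Set (Rot A B))
    (hRM : ∀ M c, Stable I M → chainTo I M0 M c → RM M = chainRots I c) :
    RM Mz = RotSet I := by
  obtain ⟨hM0, hM0_max⟩ := hM0
  obtain ⟨hMz, hMz_min⟩ := hMz
  apply subset_antisymm
  · obtain ⟨c, hc⟩ := exists_chainTo hM0 hMz (hM0_max Mz hMz)
    rw [hRM Mz c hMz hc]
    exact chainRots_subset_rotSet hc
  · rintro _ ⟨M, M', hM'M, rfl⟩
    obtain ⟨c, hc⟩ := exists_chainTo hM0 hM'M.2.1 (hM0_max M hM'M.2.1)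
    obtain ⟨d, hd⟩ := exists_chainTo hM'M.1 hMz (hMz_min M' hM'M.1)
    rw [hRM Mz (c ++ d) hMz (hc.append hd hM'M)]
    exact rho_mem_chainRots_append hc.2.1 hd.1

end SM
end
end
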